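/- arXiv:2203.05618 — 4 statements merged into one kernel-verified Lean document; each statement's English description precedes it below -/
import Mathlib

section
/- Let X be a finite set of positive reals partitioned into K subsets X_1,...,X_K with sums S_1,...,S_K. Suppose for each nonempty X_k, its minimum element m_k satisfies m_k ≥ S_k - min_j S_j. Then the partition is locally optimal: for all i, j and all x ∈ X_i, |(S_i - x) - (S_j + x)| ≥ |S_i - S_j|. -/
theorem stmt_8 (K : ℕ) (hK : 0 < K) (X : Finset ℝ)
    (hpos : ∀ x ∈ X, (0:ℝ) < x)
    (P : Fin K → Finset ℝ)
    (hdisj : ∀ i j, i ≠ j → Disjoint (P i) (P j))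
    (hunion : Finset.univ.biUnion P = X)
    (hmin : ∀ k : Fin K, ∀ h : (P k).Nonempty,
      (P k).min' h ≥ (P k).sum id -
        Finset.univ.inf' (Finset.univ_nonempty_iff.mpr ⟨⟨0, hK⟩⟩)
          (fun j => (P j).sum id)) :
    ∀ i j : Fin K, ∀ x ∈ P i,
      |((P i).sum id - x) - ((P j).sum id + x)| ≥
        |(P i).sum id - (P j).sum id| := by
  intro i j x hx
  have hxX : x ∈ X := by
    rw [← hunion]; exact Finset.mem_biUnion.mpr ⟨i, Finset.mem_univ i, hx⟩
  have hx0 : (0:ℝ) < x := hpos x hxX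
  have hne : (P i).Nonempty := ⟨x, hx⟩
  have hmin' : (P i).min' hne ≤ x := Finset.min'_le _ _ hx
  have hinf : Finset.univ.inf' (Finset.univ_nonempty_iff.mpr ⟨⟨0, hK⟩⟩)
      (fun j => (P j).sum id) ≤ (P j).sum id :=
    Finset.inf'_le _ (Finset.mem_univ j)
  have hkey : (P i).sum id - (P j).sum id ≤ x := by
    have := hmin i hne
    linarith
  rw [ge_iff_le, abs_le]
  constructor
  · rw [abs_of_nonpos (by linarith)]
    linarith [abs_nonneg ((P i).sum id - (P j).sum id),
      le_abs_self ((P i).sum id - (P j).sum id)]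
  · linarith [abs_of_nonpos (show ((P i).sum id - x) - ((P j).sum id + x) ≤ 0 by
      rcases le_or_gt ((P i).sum id - (P j).sum id) 0 with h | h
      · linarith
      · linarith), le_abs_self ((P i).sum id - (P j).sum id),
      neg_abs_le ((P i).sum id - (P j).sum id)]
end

section
/- Let X be a finite set of reals partitioned into X_1,...,X_K with sums S_1,...,S_K summing to S. If the partition is locally optimal and all elements are positive, then for any i with X_i nonempty, S_i - min_j S_j ≤ min_{x ∈ X_i} x ≤ max_{x ∈ X} x. In particular, max_k S_k - min_k S_k ≤ max_{x ∈ X} x. -/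
theorem stmt_13 (K : ℕ) (hK : 0 < K) (X : Finset ℝ) (hX : X.Nonempty)
    (hpos : ∀ x ∈ X, (0:ℝ) < x)
    (P : Fin K → Finset ℝ)
    (hdisj : ∀ i j, i ≠ j → Disjoint (P i) (P j))
    (hunion : Finset.univ.biUnion P = X)
    (hopt : ∀ i j : Fin K, ∀ x ∈ P i,
      |((P i).sum id - x) - ((P j).sum id + x)| ≥
        |(P i).sum id - (P j).sum id|) :
    (∀ i : Fin K, ∀ h : (P i).Nonempty,
      (P i).sum id - Finset.univ.inf' (Finset.univ_nonempty_iff.mpr ⟨⟨0, hK⟩⟩)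
          (fun k => (P k).sum id) ≤ (P i).min' h ∧
      (P i).min' h ≤ X.max' hX) ∧
    Finset.univ.sup' (Finset.univ_nonempty_iff.mpr ⟨⟨0, hK⟩⟩)
        (fun k => (P k).sum id) -
      Finset.univ.inf' (Finset.univ_nonempty_iff.mpr ⟨⟨0, hK⟩⟩)
        (fun k => (P k).sum id) ≤ X.max' hX := by
  have hne : (Finset.univ : Finset (Fin K)).Nonempty :=
    Finset.univ_nonempty_iff.mpr ⟨⟨0, hK⟩⟩
  have hPX : ∀ i : Fin K, ∀ x ∈ P i, x ∈ X := by
    intro i x hx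
    rw [← hunion]
    exact Finset.mem_biUnion.mpr ⟨i, Finset.mem_univ i, hx⟩
  have key : ∀ i j : Fin K, ∀ x ∈ P i, (P i).sum id - (P j).sum id ≤ x := by
    intro i j x hx
    have hxp := hpos x (hPX i x hx)
    have h := hopt i j x hx
    have h2 : ((P i).sum id - (P j).sum id)^2 ≤
        (((P i).sum id - x) - ((P j).sum id + x))^2 := by
      have := mul_self_le_mul_self (abs_nonneg _) h
      simpa [abs_mul_abs_self, sq] using this
    nlinarith [h2, hxp]
  have hsum_nonneg : ∀ j : Fin K, 0 ≤ (P j).sum id :=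
    fun j => Finset.sum_nonneg fun x hx => (hpos x (hPX j x hx)).le
  obtain ⟨j0, -, hj0⟩ := Finset.exists_mem_eq_inf' hne (fun k => (P k).sum id)
  have hmain : ∀ i : Fin K, ∀ h : (P i).Nonempty,
      (P i).sum id - Finset.univ.inf' (Finset.univ_nonempty_iff.mpr ⟨⟨0, hK⟩⟩)
          (fun k => (P k).sum id) ≤ (P i).min' h ∧
      (P i).min' h ≤ X.max' hX := by
    intro i h
    constructor
    · have hk := key i j0 _ ((P i).min'_mem h)
      have : Finset.univ.inf' (Finset.univ_nonempty_iff.mpr ⟨⟨0, hK⟩⟩)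
          (fun k => (P k).sum id) = (P j0).sum id := hj0
      linarith
    · exact X.le_max' _ (hPX i _ ((P i).min'_mem h))
  refine ⟨hmain, ?_⟩
  obtain ⟨k0, -, hk0⟩ := Finset.exists_mem_eq_sup' hne (fun k => (P k).sum id)
  have hsup : Finset.univ.sup' (Finset.univ_nonempty_iff.mpr ⟨⟨0, hK⟩⟩)
      (fun k => (P k).sum id) = (P k0).sum id := hk0
  have hinf : Finset.univ.inf' (Finset.univ_nonempty_iff.mpr ⟨⟨0, hK⟩⟩)
      (fun k => (P k).sum id) = (P j0).sum id := hj0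
  by_cases hk : (P k0).Nonempty
  · obtain ⟨h1, h2⟩ := hmain k0 hk
    rw [hinf] at h1
    linarith [hsup, hinf, h1, h2]
  · have hz : (P k0).sum id = 0 := by
      rw [Finset.not_nonempty_iff_eq_empty.mp hk]; simp
    have hmax : 0 < X.max' hX := hpos _ (X.max'_mem hX)
    have := hsum_nonneg j0
    linarith [hsup, hinf]
end

section
/- Suppose a maximum-sum set X_i in a partition of positive reals satisfies: its minimum element x_n obeys x_n ≥ S_i - min_k S_k. Then for every element x ∈ X_i and every k, moving x from X_i to X_k does not strictly decrease |S_i - S_k|. -/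
theorem stmt_15 (K : ℕ) (hK : 0 < K) (X : Finset ℝ)
    (hpos : ∀ x ∈ X, (0:ℝ) < x)
    (P : Fin K → Finset ℝ)
    (hdisj : ∀ i j, i ≠ j → Disjoint (P i) (P j))
    (hunion : Finset.univ.biUnion P = X)
    (i : Fin K) (hi : ∀ k, (P k).sum id ≤ (P i).sum id)
    (hne : (P i).Nonempty)
    (hmin : (P i).min' hne ≥ (P i).sum id -
      Finset.univ.inf' (Finset.univ_nonempty_iff.mpr ⟨⟨0, hK⟩⟩)
        (fun k => (P k).sum id)) :
    ∀ x ∈ P i, ∀ k : Fin K,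
      |((P i).sum id - x) - ((P k).sum id + x)| ≥
        |(P i).sum id - (P k).sum id| := by
  intro x hx k
  have hxX : x ∈ X := by
    rw [← hunion]; exact Finset.mem_biUnion.mpr ⟨i, Finset.mem_univ i, hx⟩
  have hx0 : (0:ℝ) < x := hpos x hxX
  have hinf : Finset.univ.inf' (Finset.univ_nonempty_iff.mpr ⟨⟨0, hK⟩⟩)
      (fun k => (P k).sum id) ≤ (P k).sum id :=
    Finset.inf'_le _ (Finset.mem_univ k)
  have hxd : x ≥ (P i).sum id - (P k).sum id := by
    have := (P i).min'_le x hx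
    linarith [hmin]
  have hd : (0:ℝ) ≤ (P i).sum id - (P k).sum id := by linarith [hi k]
  rw [abs_of_nonneg hd]
  rw [abs_sub_comm]
  have : ((P k).sum id + x) - ((P i).sum id - x) = 2*x - ((P i).sum id - (P k).sum id) := by ring
  rw [this, abs_of_nonneg (by linarith)]
  linarith
end

section
/- Let X_1,...,X_K be a partition of a finite set of reals with sums S_1,...,S_K, and suppose the partition minimizes Σ_{k=1}^K S_k² over all K-way partitions of X. Then the partition is locally optimal: for all i, j and x ∈ X_i, |(S_i - x) - (S_j + x)| ≥ |S_i - S_j|. -/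
theorem stmt_18 (K : ℕ) (X : Finset ℝ)
    (P : Fin K → Finset ℝ)
    (hdisj : ∀ i j, i ≠ j → Disjoint (P i) (P j))
    (hunion : Finset.univ.biUnion P = X)
    (hmin : ∀ Q : Fin K → Finset ℝ,
      (∀ i j, i ≠ j → Disjoint (Q i) (Q j)) →
      Finset.univ.biUnion Q = X →
      (∑ k, ((P k).sum id) ^ 2) ≤ (∑ k, ((Q k).sum id) ^ 2)) :
    ∀ i j : Fin K, ∀ x ∈ P i,
      |((P i).sum id - x) - ((P j).sum id + x)| ≥
        |(P i).sum id - (P j).sum id| := by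
  intro i j x hx
  by_cases hij : i = j
  · subst hij
    simp only [sub_self, abs_zero, ge_iff_le]
    exact abs_nonneg _
  · have hxj : x ∉ P j := Finset.disjoint_left.mp (hdisj i j hij) hx
    set Q : Fin K → Finset ℝ :=
      fun k => if k = i then (P i).erase x else if k = j then insert x (P j) else P k with hQ
    have hQmem : ∀ (k : Fin K) (a : ℝ), a ∈ Q k →
        (a ∈ P k ∧ ¬(k = i ∧ a = x)) ∨ (k = j ∧ a = x) := by
      intro k a ha
      simp only [hQ] at ha
      split_ifs at ha with h1 h2
      · subst h1
        rcases Finset.mem_erase.mp ha with ⟨hne, hmem⟩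
        exact Or.inl ⟨hmem, fun h => hne h.2⟩
      · subst h2
        rcases Finset.mem_insert.mp ha with rfl | h
        · exact Or.inr ⟨rfl, rfl⟩
        · exact Or.inl ⟨h, fun hh => hxj (hh.2 ▸ h)⟩
      · exact Or.inl ⟨ha, fun hh => h1 hh.1⟩
    have hxonly : ∀ k : Fin K, k ≠ i → x ∉ P k := by
      intro k hk
      exact Finset.disjoint_left.mp (hdisj k i hk) |>.mt (fun h => h hx) |> fun h => by
        intro hxk; exact (Finset.disjoint_left.mp (hdisj k i hk) hxk) hx
    have hQdisj : ∀ k l, k ≠ l → Disjoint (Q k) (Q l) := by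
      intro k l hkl
      rw [Finset.disjoint_left]
      intro a hak hal
      rcases hQmem k a hak with ⟨hPk, hk⟩ | ⟨rfl, rfl⟩
      · rcases hQmem l a hal with ⟨hPl, hl⟩ | ⟨rfl, rfl⟩
        · exact Finset.disjoint_left.mp (hdisj k l hkl) hPk hPl
        · exact hxonly k (fun h => hk ⟨h, rfl⟩) hPk
      · rcases hQmem l a hal with ⟨hPl, hl⟩ | ⟨hlj, _⟩
        · by_cases hli : l = i
          · exact hl ⟨hli, rfl⟩
          · exact hxonly l hli hPl
        · exact hkl (hlj ▸ rfl)
    have hQunion : Finset.univ.biUnion Q = X := by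
      rw [← hunion]
      ext a
      simp only [Finset.mem_biUnion, Finset.mem_univ, true_and]
      constructor
      · rintro ⟨k, hk⟩
        rcases hQmem k a hk with ⟨hPk, _⟩ | ⟨_, rfl⟩
        · exact ⟨k, hPk⟩
        · exact ⟨i, hx⟩
      · rintro ⟨k, hk⟩
        by_cases hki : k = i
        · subst hki
          by_cases hax : a = x
          · exact ⟨j, by simp [hQ, Ne.symm hij, hax]⟩
          · exact ⟨k, by simp [hQ, Finset.mem_erase, hax, hk]⟩
        · refine ⟨k, ?_⟩
          simp only [hQ, if_neg hki]
          split_ifs with hkj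
          · subst hkj; exact Finset.mem_insert_of_mem hk
          · exact hk
    have hA : ((P i).erase x).sum id = (P i).sum id - x := by
      have := Finset.sum_erase_eq_sub (f := id) hx
      simpa using this
    have hB : (insert x (P j)).sum id = (P j).sum id + x := by
      rw [Finset.sum_insert hxj]; simp [add_comm]
    have hdiffsum : ∑ k, (((Q k).sum id) ^ 2 - ((P k).sum id) ^ 2) =
        (((P i).sum id - x) ^ 2 - ((P i).sum id) ^ 2) +
        (((P j).sum id + x) ^ 2 - ((P j).sum id) ^ 2) := by
      have h1 : ∑ k ∈ ({i, j} : Finset (Fin K)), (((Q k).sum id) ^ 2 - ((P k).sum id) ^ 2) =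
          ∑ k, (((Q k).sum id) ^ 2 - ((P k).sum id) ^ 2) := by
        refine Finset.sum_subset (Finset.subset_univ _) ?_
        intro k _ hk
        simp only [Finset.mem_insert, Finset.mem_singleton, not_or] at hk
        simp [hQ, hk.1, hk.2]
      rw [← h1, Finset.sum_pair hij]
      have hQi : Q i = (P i).erase x := by simp [hQ]
      have hQj : Q j = insert x (P j) := by simp [hQ, Ne.symm hij]
      rw [hQi, hQj, hA, hB]
    have hm := hmin Q hQdisj hQunion
    have h0 : 0 ≤ ∑ k, (((Q k).sum id) ^ 2 - ((P k).sum id) ^ 2) := by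
      rw [Finset.sum_sub_distrib]
      linarith
    rw [hdiffsum] at h0
    have hsq : ((P i).sum id - (P j).sum id) ^ 2 ≤
        (((P i).sum id - x) - ((P j).sum id + x)) ^ 2 := by nlinarith
    rw [ge_iff_le, ← Real.sqrt_sq_eq_abs, ← Real.sqrt_sq_eq_abs]
    exact Real.sqrt_le_sqrt hsq
end
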